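/- Agnostic PAC learnability of Nash equilibrium: Let H be a nonempty set of measurable NE approximators, D a probability measure on U, and ε, δ ∈ (0,1). Suppose C is a nonempty finite set of measurable NE approximators of cardinality K that (ε/12)-covers H, and assume the set {S ∈ U^m : ∃h ∈ H, |L_S(h) − L_D(h)| > ε/2} is measurable with respect to D^m. If m ≥ (18/ε²)·(ln(2/δ) + ln K), then with probability at least 1 − δ over the draw of an i.i.d. sample S ∼ D^m, every empirical risk minimizer h_S ∈ H (i.e., any h_S ∈ H with L_S(h_S) ≤ L_S(h) for all h ∈ H) satisfies L_D(h_S) ≤ inf_{h∈H} L_D(h) + ε. -/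

import Mathlib

open Finset MeasureTheory

section NashDefs

variable {N : Type*} {A : N → Type*}

/-- `σ` is a mixed strategy profile: each `σ i` is a probability distribution on `A i`. -/
def IsMixedProfile [∀ i, Fintype (A i)] (σ : ∀ i, A i → ℝ) : Prop :=
  (∀ i a, 0 ≤ σ i a) ∧ ∀ i, ∑ a, σ i a = 1

/-- Expected utility of player `i` when the mixed strategy profile `σ` is played:
`u_i(σ) = ∑_{a ∈ A} (∏_j σ_j(a_j)) u_i(a)`. -/
def expUtil [Fintype N] [DecidableEq N] [∀ i, Fintype (A i)]
    (u : N → (∀ j, A j) → ℝ) (i : N) (σ : ∀ j, A j → ℝ) : ℝ :=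
  ∑ a : ∀ j, A j, (∏ j, σ j (a j)) * u i a

/-- The pure strategy of player `i` playing action `b` with probability one. -/
def pureStrat [∀ i, DecidableEq (A i)] {i : N} (b : A i) : A i → ℝ :=
  fun c => if c = b then 1 else 0

/-- Nash approximation loss:
`NashApr(σ, u) = max_{i ∈ N} max_{b ∈ A_i} [u_i(b, σ_{-i}) - u_i(σ)]`. -/
noncomputable def nashApr [Fintype N] [DecidableEq N] [Nonempty N]
    [∀ i, Fintype (A i)] [∀ i, DecidableEq (A i)] [∀ i, Nonempty (A i)]
    (σ : ∀ i, A i → ℝ) (u : N → (∀ j, A j) → ℝ) : ℝ :=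
  Finset.univ.sup' Finset.univ_nonempty fun i : N =>
    Finset.univ.sup' Finset.univ_nonempty fun b : A i =>
      expUtil u i (Function.update σ i (pureStrat b)) - expUtil u i σ

/-- ℓ1-distance between mixed strategy profiles:
`‖σ - σ'‖₁ = ∑_{i ∈ N} ∑_{a_i ∈ A_i} |σ_i(a_i) - σ'_i(a_i)|`. -/
def dist1 [Fintype N] [∀ i, Fintype (A i)] (σ σ' : ∀ i, A i → ℝ) : ℝ :=
  ∑ i, ∑ a, |σ i a - σ' i a|

/-- ℓmax-distance between game utilities:
`‖u - v‖max = max_{i ∈ N} max_{a ∈ A} |u_i(a) - v_i(a)|`. -/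
noncomputable def distMax [Fintype N] [DecidableEq N] [Nonempty N]
    [∀ i, Fintype (A i)] [∀ i, Nonempty (A i)]
    (u v : N → (∀ j, A j) → ℝ) : ℝ :=
  Finset.univ.sup' Finset.univ_nonempty fun i : N =>
    Finset.univ.sup' Finset.univ_nonempty fun a : ∀ j, A j => |u i a - v i a|

end NashDefs

/-- The set of all game utilities (with values in `[0,1]`) for fixed players `N`
and action space `A`, as a subtype. -/
abbrev GameUtil (N : Type*) (A : N → Type*) : Type _ :=
  {u : N → (∀ j, A j) → ℝ // ∀ i a, u i a ∈ Set.Icc (0 : ℝ) 1}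

/-- An NE approximator maps game utilities to mixed strategy profiles. -/
abbrev NEApprox (N : Type*) (A : N → Type*) [∀ i, Fintype (A i)] : Type _ :=
  {h : GameUtil N A → ∀ i, A i → ℝ // ∀ u, IsMixedProfile (h u)}

section Risk

variable {N : Type*} {A : N → Type*} [Fintype N] [DecidableEq N] [Nonempty N]
  [∀ i, Fintype (A i)] [∀ i, DecidableEq (A i)] [∀ i, Nonempty (A i)]

/-- Nash approximation loss of an NE approximator on a game. -/
noncomputable def nashLoss (h : NEApprox N A) (u : GameUtil N A) : ℝ :=
  nashApr (h.1 u) u.1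

/-- True risk `L_D(h) = E_{u ∼ D}[NashApr(h(u), u)]`. -/
noncomputable def trueRisk (D : Measure (GameUtil N A)) (h : NEApprox N A) : ℝ :=
  ∫ u, nashLoss h u ∂D

/-- Empirical risk `L_S(h) = (1/m) ∑_j NashApr(h(u⁽ʲ⁾), u⁽ʲ⁾)`. -/
noncomputable def empRisk {m : ℕ} (S : Fin m → GameUtil N A) (h : NEApprox N A) : ℝ :=
  (1 / (m : ℝ)) * ∑ j, nashLoss h (S j)

/-- `C` `r`-covers `H` under the `ℓ_{∞,1}`-distance:
every `h ∈ H` is within `ℓ_{∞,1}`-distance `r` of some `g ∈ C`. -/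
def Covers (r : ℝ) (C : Finset (NEApprox N A)) (H : Set (NEApprox N A)) : Prop :=
  ∀ h ∈ H, ∃ g ∈ C, ∀ u, dist1 (h.1 u) (g.1 u) ≤ r

end Risk

/-!
Uniform convergence over the finite cover suffices. Nash approximation loss is 2-Lipschitz in
the strategy profile for the ℓ1-distance, so an (ε/12)-cover moves both empirical and true risk
by at most ε/6. By Hoeffding's inequality and a union bound over the `K` elements of the cover,
with probability at least `1 - 2K exp(-m ε²/18) ≥ 1 - δ` every element of the cover has
empirical risk within ε/6 of its true risk, hence every `h ∈ H` has them within ε/2, and an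
empirical risk minimizer is then ε-optimal.
-/

open Real ProbabilityTheory

section Hoeffding

variable {Ω : Type*} [MeasurableSpace Ω] {ν : Measure Ω} [IsProbabilityMeasure ν] {f : Ω → ℝ}

lemma hasSubgaussianMGF_eval_sub_integral (hf : Measurable f) (hf01 : ∀ ω, f ω ∈ Set.Icc 0 1)
    {m : ℕ} (j : Fin m) :
    HasSubgaussianMGF (fun S : Fin m → Ω => f (S j) - ν[f]) (1 / 4) (Measure.pi fun _ => ν) := by
  have h : HasSubgaussianMGF (fun ω => f ω - ν[f]) (1 / 4)
      ((Measure.pi fun _ : Fin m => ν).map (Function.eval j)) := by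
    rw [(measurePreserving_eval (fun _ : Fin m => ν) j).map_eq]
    convert hasSubgaussianMGF_of_mem_Icc hf.aemeasurable (ae_of_all ν hf01) using 1
    ext; norm_num
  exact HasSubgaussianMGF.of_map (X := fun ω => f ω - ν[f]) (Y := fun S : Fin m → Ω => S j)
    (measurable_pi_apply j).aemeasurable h

lemma measureReal_pi_abs_sampleMean_sub_integral_ge_le (hf : Measurable f)
    (hf01 : ∀ ω, f ω ∈ Set.Icc 0 1) (m : ℕ) {t : ℝ} (ht : 0 ≤ t) :
    (Measure.pi fun _ : Fin m => ν).real {S | t ≤ |1 / (m : ℝ) * ∑ j, f (S j) - ν[f]|}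
      ≤ 2 * exp (-(2 * m * t ^ 2)) := by
  set μ := Measure.pi fun _ : Fin m => ν
  rcases m.eq_zero_or_pos with rfl | hm
  · exact measureReal_le_one.trans (by norm_num)
  set X : Fin m → (Fin m → Ω) → ℝ := fun j S => f (S j) - ν[f]
  have hX : iIndepFun X μ :=
    iIndepFun_pi (X := fun _ ω => f ω - ν[f]) fun _ => (hf.sub_const _).aemeasurable
  have hsubG j (_ : j ∈ Finset.univ) : HasSubgaussianMGF (X j) (1 / 4) μ :=
    hasSubgaussianMGF_eval_sub_integral hf hf01 j
  have hmt : 0 ≤ m * t := by positivity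
  have hright := HasSubgaussianMGF.measure_sum_ge_le_of_iIndepFun hX hsubG hmt
  have hleft := HasSubgaussianMGF.measure_sum_ge_le_of_iIndepFun
    (hX.comp (fun _ => Neg.neg) fun _ => measurable_neg) (fun j hj => (hsubG j hj).neg) hmt
  have hexp : -(m * t) ^ 2 / (2 * ((∑ _j : Fin m, (1 / 4 : NNReal) : NNReal) : ℝ))
      = -(2 * m * t ^ 2) := by
    simp only [Finset.sum_const, Finset.card_univ, Fintype.card_fin, nsmul_eq_mul]
    push_cast
    field_simp
    ring
  rw [hexp] at hright hleft
  have hsub : {S | t ≤ |1 / (m : ℝ) * ∑ j, f (S j) - ν[f]|} ⊆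
      {S | m * t ≤ ∑ j, X j S} ∪ {S | m * t ≤ ∑ j, (Neg.neg ∘ X j) S} := by
    intro S hS
    have hmean : 1 / (m : ℝ) * ∑ j, f (S j) - ν[f] = (∑ j, X j S) / m := by
      simp only [X, Finset.sum_sub_distrib, Finset.sum_const, Finset.card_univ, Fintype.card_fin,
        nsmul_eq_mul]
      field_simp
    rw [Set.mem_ofPred_eq, hmean, abs_div, Nat.abs_cast, le_div_iff₀ (by positivity), le_abs,
      mul_comm] at hS
    simpa [Finset.sum_neg_distrib] using hS
  calc μ.real _ ≤ μ.real ({S | m * t ≤ ∑ j, X j S} ∪ {S | m * t ≤ ∑ j, (Neg.neg ∘ X j) S}) :=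
        measureReal_mono hsub
    _ ≤ _ := measureReal_union_le _ _
    _ ≤ 2 * exp (-(2 * m * t ^ 2)) := by linarith

end Hoeffding

lemma le_csInf_image_add_of_isMinOn {ι : Type*} {H : Set ι} (hH : H.Nonempty) {f g : ι → ℝ}
    {r : ℝ} (hfg : ∀ h ∈ H, |f h - g h| ≤ r) {x : ι} (hx : x ∈ H) (hmin : IsMinOn f H x) :
    g x ≤ sInf (g '' H) + 2 * r := by
  suffices g x - 2 * r ≤ sInf (g '' H) by linarith
  refine le_csInf (hH.image g) ?_
  rintro _ ⟨h, hh, rfl⟩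
  linarith [(abs_le.1 (hfg x hx)).1, (abs_le.1 (hfg h hh)).2, isMinOn_iff.1 hmin h hh]

lemma natCast_mul_two_mul_exp_neg_le {K : ℕ} {δ x : ℝ} (hδ : 0 < δ)
    (hx : log (2 / δ) + log K ≤ x) : K * (2 * exp (-x)) ≤ δ := by
  rcases K.eq_zero_or_pos with rfl | hK
  · simpa using hδ.le
  have hK' : (0 : ℝ) < K := by exact_mod_cast hK
  calc K * (2 * exp (-x)) ≤ K * (2 * exp (-(log (2 / δ) + log K))) := by gcongr
    _ = δ := by
      rw [neg_add, exp_add, exp_neg, exp_neg, exp_log (by positivity), exp_log hK']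
      field_simp

section MixedProfiles

variable {N : Type*} {A : N → Type*} [Fintype N] [DecidableEq N] [∀ i, Fintype (A i)]
  {σ τ : ∀ i, A i → ℝ}

omit [DecidableEq N] in
lemma dist1_comm (σ τ : ∀ i, A i → ℝ) : dist1 σ τ = dist1 τ σ := by
  simp only [dist1, abs_sub_comm]

lemma dist1_update_le (σ τ : ∀ i, A i → ℝ) (i : N) (x : A i → ℝ) :
    dist1 (Function.update σ i x) (Function.update τ i x) ≤ dist1 σ τ := by
  refine Finset.sum_le_sum fun j _ => ?_
  rcases eq_or_ne j i with rfl | hj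
  · simpa using Finset.sum_nonneg fun b _ => abs_nonneg (σ j b - τ j b)
  · simp [hj]

omit [∀ i, Fintype (A i)] in
lemma prod_update_apply (σ : ∀ i, A i → ℝ) (i : N) (x : A i → ℝ) (a : ∀ j, A j) :
    ∏ j, Function.update σ i x j (a j) = x (a i) * ∏ j ∈ Finset.univ.erase i, σ j (a j) := by
  rw [← Finset.mul_prod_erase _ _ (Finset.mem_univ i), Function.update_self]
  congr 1
  exact Finset.prod_congr rfl fun j hj => by rw [Function.update_of_ne (Finset.ne_of_mem_erase hj)]

namespace IsMixedProfile

omit [DecidableEq N] in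
lemma prod_nonneg (hσ : IsMixedProfile σ) (a : ∀ j, A j) : 0 ≤ ∏ j, σ j (a j) :=
  Finset.prod_nonneg fun j _ => hσ.1 j (a j)

lemma sum_prod_eq_one (hσ : IsMixedProfile σ) : ∑ a : ∀ j, A j, ∏ j, σ j (a j) = 1 := by
  rw [← Fintype.prod_sum, Fintype.prod_eq_one _ hσ.2]

lemma sum_prod_update (hσ : IsMixedProfile σ) (i : N) (x : A i → ℝ) :
    ∑ a : ∀ j, A j, ∏ j, Function.update σ i x j (a j) = ∑ b, x b := by
  rw [← Fintype.prod_sum, Fintype.prod_eq_single i fun j hj => by simp [hj, hσ.2 j]]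
  simp

omit [Fintype N] in
lemma update {i : N} {x : A i → ℝ} (hσ : IsMixedProfile σ) (hx0 : ∀ b, 0 ≤ x b)
    (hx1 : ∑ b, x b = 1) : IsMixedProfile (Function.update σ i x) := by
  constructor
  · intro j b
    rcases eq_or_ne j i with rfl | hj
    · simpa using hx0 b
    · simpa [hj] using hσ.1 j b
  · intro j
    rcases eq_or_ne j i with rfl | hj
    · simpa using hx1
    · simpa [hj] using hσ.2 j

omit [Fintype N] in
lemma update_pureStrat [∀ i, DecidableEq (A i)] (hσ : IsMixedProfile σ) (i : N) (b : A i) :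
    IsMixedProfile (Function.update σ i (pureStrat b)) :=
  hσ.update (fun c => by unfold pureStrat; split_ifs <;> norm_num) (by simp [pureStrat])

omit [Fintype N] in
lemma piecewise (hσ : IsMixedProfile σ) (hτ : IsMixedProfile τ) (s : Finset N) :
    IsMixedProfile (s.piecewise σ τ) := by
  constructor
  · intro j b
    by_cases hj : j ∈ s <;> simp [hj, hσ.1, hτ.1]
  · intro j
    by_cases hj : j ∈ s <;> simp [hj, hσ.2, hτ.2]

lemma sum_abs_prod_update_sub_prod_update (hσ : IsMixedProfile σ) (i : N) (x y : A i → ℝ) :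
    ∑ a : ∀ j, A j, |∏ j, Function.update σ i x j (a j) - ∏ j, Function.update σ i y j (a j)|
      = ∑ b, |x b - y b| := by
  rw [← hσ.sum_prod_update i fun b => |x b - y b|]
  refine Finset.sum_congr rfl fun a _ => ?_
  simp only [prod_update_apply, ← sub_mul, abs_mul,
    abs_of_nonneg (Finset.prod_nonneg fun j _ => hσ.1 j (a j))]

-- Hybrid argument: switch the players from `τ` to `σ` one at a time.
lemma sum_abs_prod_sub_prod_le_dist1 (hσ : IsMixedProfile σ) (hτ : IsMixedProfile τ) :
    ∑ a : ∀ j, A j, |∏ j, σ j (a j) - ∏ j, τ j (a j)| ≤ dist1 σ τ := by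
  suffices h : ∀ s : Finset N, ∑ a : ∀ j, A j,
      |∏ j, s.piecewise σ τ j (a j) - ∏ j, τ j (a j)| ≤ ∑ j ∈ s, ∑ b, |σ j b - τ j b| by
    simpa [dist1] using h Finset.univ
  intro s
  induction s using Finset.induction_on with
  | empty => simp
  | insert i s hi ih =>
    set ρ := s.piecewise σ τ
    have hρ : ρ = Function.update ρ i (τ i) := by
      rw [← Finset.piecewise_eq_of_notMem s σ τ hi, Function.update_eq_self]
    calc ∑ a : ∀ j, A j, |∏ j, (insert i s).piecewise σ τ j (a j) - ∏ j, τ j (a j)|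
        ≤ ∑ a : ∀ j, A j, (|∏ j, Function.update ρ i (σ i) j (a j) - ∏ j, ρ j (a j)|
            + |∏ j, ρ j (a j) - ∏ j, τ j (a j)|) := by
          rw [Finset.piecewise_insert]
          exact Finset.sum_le_sum fun a _ => abs_sub_le _ _ _
      _ ≤ ∑ b, |σ i b - τ i b| + ∑ j ∈ s, ∑ b, |σ j b - τ j b| := by
          rw [Finset.sum_add_distrib]
          nth_rw 2 [hρ]
          rw [(hσ.piecewise hτ s).sum_abs_prod_update_sub_prod_update]
          exact add_le_add_right ih _
      _ = ∑ j ∈ insert i s, ∑ b, |σ j b - τ j b| := by rw [Finset.sum_insert hi]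

end IsMixedProfile

end MixedProfiles

section NashApproximation

variable {N : Type*} {A : N → Type*} [Fintype N] [DecidableEq N] [∀ i, Fintype (A i)]
  {u : N → (∀ j, A j) → ℝ} {σ τ : ∀ i, A i → ℝ}

lemma expUtil_mem_Icc (hu : ∀ i a, u i a ∈ Set.Icc (0 : ℝ) 1) (hσ : IsMixedProfile σ) (i : N) :
    expUtil u i σ ∈ Set.Icc 0 1 := by
  constructor
  · exact Finset.sum_nonneg fun a _ => mul_nonneg (hσ.prod_nonneg a) (hu i a).1
  · calc expUtil u i σ ≤ ∑ a : ∀ j, A j, ∏ j, σ j (a j) :=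
          Finset.sum_le_sum fun a _ => mul_le_of_le_one_right (hσ.prod_nonneg a) (hu i a).2
      _ = 1 := hσ.sum_prod_eq_one

lemma abs_expUtil_sub_le (hu : ∀ i a, u i a ∈ Set.Icc (0 : ℝ) 1) (hσ : IsMixedProfile σ)
    (hτ : IsMixedProfile τ) (i : N) :
    |expUtil u i σ - expUtil u i τ| ≤ dist1 σ τ :=
  calc |expUtil u i σ - expUtil u i τ|
      = |∑ a : ∀ j, A j, (∏ j, σ j (a j) - ∏ j, τ j (a j)) * u i a| := by
        simp only [expUtil, ← Finset.sum_sub_distrib, sub_mul]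
    _ ≤ ∑ a : ∀ j, A j, |∏ j, σ j (a j) - ∏ j, τ j (a j)| := by
        refine (Finset.abs_sum_le_sum_abs _ _).trans (Finset.sum_le_sum fun a _ => ?_)
        rw [abs_mul, abs_of_nonneg (hu i a).1]
        exact mul_le_of_le_one_right (abs_nonneg _) (hu i a).2
    _ ≤ dist1 σ τ := hσ.sum_abs_prod_sub_prod_le_dist1 hτ

variable [∀ i, DecidableEq (A i)]

lemma expUtil_eq_sum_mul_expUtil_update_pureStrat (σ : ∀ i, A i → ℝ) (i : N) :
    expUtil u i σ = ∑ b, σ i b * expUtil u i (Function.update σ i (pureStrat b)) := by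
  simp only [expUtil, Finset.mul_sum]
  rw [Finset.sum_comm]
  refine Finset.sum_congr rfl fun a _ => ?_
  simp only [prod_update_apply, pureStrat]
  rw [← Finset.mul_prod_erase _ _ (Finset.mem_univ i)]
  simp [ite_mul, mul_assoc]

variable [Nonempty N] [∀ i, Nonempty (A i)]

lemma expUtil_update_pureStrat_sub_le_nashApr (σ : ∀ i, A i → ℝ) (u : N → (∀ j, A j) → ℝ)
    (i : N) (b : A i) :
    expUtil u i (Function.update σ i (pureStrat b)) - expUtil u i σ ≤ nashApr σ u :=
  Finset.le_sup'_of_le _ (Finset.mem_univ i)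
    (Finset.le_sup' (fun b : A i => expUtil u i (Function.update σ i (pureStrat b))
      - expUtil u i σ) (Finset.mem_univ b))

lemma nashApr_nonneg (hσ : IsMixedProfile σ) : 0 ≤ nashApr σ u := by
  obtain ⟨i⟩ := ‹Nonempty N›
  set dev := fun b : A i => expUtil u i (Function.update σ i (pureStrat b))
  obtain ⟨b, -, hb⟩ := Finset.exists_mem_eq_sup' Finset.univ_nonempty dev
  have hbest : expUtil u i σ ≤ dev b :=
    calc expUtil u i σ = ∑ c, σ i c * dev c := expUtil_eq_sum_mul_expUtil_update_pureStrat σ i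
      _ ≤ ∑ c, σ i c * dev b := Finset.sum_le_sum fun c _ =>
          mul_le_mul_of_nonneg_left (hb ▸ Finset.le_sup' dev (Finset.mem_univ c)) (hσ.1 i c)
      _ = dev b := by rw [← Finset.sum_mul, hσ.2 i, one_mul]
  linarith [expUtil_update_pureStrat_sub_le_nashApr σ u i b]

lemma nashApr_le_one (hu : ∀ i a, u i a ∈ Set.Icc (0 : ℝ) 1) (hσ : IsMixedProfile σ) :
    nashApr σ u ≤ 1 :=
  Finset.sup'_le _ _ fun i _ => Finset.sup'_le _ _ fun b _ => by
    linarith [(expUtil_mem_Icc hu (hσ.update_pureStrat i b) i).2, (expUtil_mem_Icc hu hσ i).1]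

lemma nashApr_le_nashApr_add (hu : ∀ i a, u i a ∈ Set.Icc (0 : ℝ) 1) (hσ : IsMixedProfile σ)
    (hτ : IsMixedProfile τ) : nashApr σ u ≤ nashApr τ u + 2 * dist1 σ τ :=
  Finset.sup'_le _ _ fun i _ => Finset.sup'_le _ _ fun b _ => by
    have hdev := abs_expUtil_sub_le hu (hσ.update_pureStrat i b) (hτ.update_pureStrat i b) i
    have hcur := abs_expUtil_sub_le hu hσ hτ i
    linarith [(abs_le.1 hdev).2, (abs_le.1 hcur).1, dist1_update_le σ τ i (pureStrat b),
      expUtil_update_pureStrat_sub_le_nashApr τ u i b]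

lemma abs_nashApr_sub_le (hu : ∀ i a, u i a ∈ Set.Icc (0 : ℝ) 1) (hσ : IsMixedProfile σ)
    (hτ : IsMixedProfile τ) : |nashApr σ u - nashApr τ u| ≤ 2 * dist1 σ τ :=
  abs_sub_le_iff.2 ⟨by linarith [nashApr_le_nashApr_add hu hσ hτ],
    by linarith [nashApr_le_nashApr_add hu hτ hσ, dist1_comm σ τ]⟩

end NashApproximation

section EmpiricalRisk

variable {N : Type*} {A : N → Type*} [Fintype N] [DecidableEq N] [Nonempty N]
  [∀ i, Fintype (A i)] [∀ i, DecidableEq (A i)] [∀ i, Nonempty (A i)]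
  {D : Measure (GameUtil N A)} [IsProbabilityMeasure D] {h g : NEApprox N A}
  {C : Finset (NEApprox N A)} {m : ℕ}

lemma nashLoss_mem_Icc (h : NEApprox N A) (u : GameUtil N A) : nashLoss h u ∈ Set.Icc 0 1 :=
  ⟨nashApr_nonneg (h.2 u), nashApr_le_one u.2 (h.2 u)⟩

lemma abs_nashLoss_sub_le (h g : NEApprox N A) (u : GameUtil N A) :
    |nashLoss h u - nashLoss g u| ≤ 2 * dist1 (h.1 u) (g.1 u) :=
  abs_nashApr_sub_le u.2 (h.2 u) (g.2 u)

lemma integrable_nashLoss (hh : Measurable (nashLoss h)) : Integrable (nashLoss h) D :=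
  Integrable.of_mem_Icc 0 1 hh.aemeasurable (ae_of_all D (nashLoss_mem_Icc h))

omit [IsProbabilityMeasure D] in
lemma abs_empRisk_sub_le {r : ℝ} (hhg : ∀ u, |nashLoss h u - nashLoss g u| ≤ r)
    (S : Fin m → GameUtil N A) : |empRisk S h - empRisk S g| ≤ r := by
  rcases m.eq_zero_or_pos with rfl | hm
  · simpa [empRisk] using (abs_nonneg _).trans (hhg ⟨0, fun _ _ => by simp⟩)
  calc |empRisk S h - empRisk S g|
      = 1 / (m : ℝ) * |∑ j, (nashLoss h (S j) - nashLoss g (S j))| := by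
        rw [empRisk, empRisk, ← mul_sub, ← Finset.sum_sub_distrib, abs_mul,
          abs_of_pos (by positivity)]
    _ ≤ 1 / (m : ℝ) * ∑ _j : Fin m, r := by
        gcongr
        exact (Finset.abs_sum_le_sum_abs _ _).trans (Finset.sum_le_sum fun j _ => hhg (S j))
    _ = r := by field_simp; simp

lemma abs_trueRisk_sub_le (hh : Measurable (nashLoss h)) (hg : Measurable (nashLoss g)) {r : ℝ}
    (hhg : ∀ u, |nashLoss h u - nashLoss g u| ≤ r) :
    |trueRisk D h - trueRisk D g| ≤ r := by
  rw [trueRisk, trueRisk, ← integral_sub (integrable_nashLoss hh) (integrable_nashLoss hg)]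
  simpa using norm_integral_le_of_norm_le_const (μ := D)
    (f := fun u => nashLoss h u - nashLoss g u) (ae_of_all D hhg)

lemma abs_empRisk_sub_trueRisk_le_of_dist1_le (hh : Measurable (nashLoss h))
    (hg : Measurable (nashLoss g)) {r : ℝ} (hhg : ∀ u, dist1 (h.1 u) (g.1 u) ≤ r)
    (S : Fin m → GameUtil N A) :
    |empRisk S h - trueRisk D h| ≤ |empRisk S g - trueRisk D g| + 4 * r := by
  have hloss u : |nashLoss h u - nashLoss g u| ≤ 2 * r :=
    (abs_nashLoss_sub_le h g u).trans (by linarith [hhg u])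
  have hemp := abs_empRisk_sub_le hloss S
  have htrue := abs_trueRisk_sub_le (D := D) hg hh fun u => by
    rw [abs_sub_comm]; exact hloss u
  have hsplit : empRisk S h - trueRisk D h = (empRisk S h - empRisk S g)
      + (empRisk S g - trueRisk D g) + (trueRisk D g - trueRisk D h) := by ring
  rw [hsplit]
  linarith [abs_add_three (empRisk S h - empRisk S g) (empRisk S g - trueRisk D g)
    (trueRisk D g - trueRisk D h)]

lemma measureReal_biUnion_deviation_le (hC : ∀ g ∈ C, Measurable (nashLoss g)) {t : ℝ}
    (ht : 0 ≤ t) :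
    (Measure.pi fun _ : Fin m => D).real
        (⋃ g ∈ C, {S | t ≤ |empRisk S g - trueRisk D g|})
      ≤ C.card * (2 * exp (-(2 * m * t ^ 2))) :=
  calc _ ≤ ∑ g ∈ C, (Measure.pi fun _ : Fin m => D).real
          {S | t ≤ |empRisk S g - trueRisk D g|} := measureReal_biUnion_finset_le _ _
    _ ≤ ∑ _g ∈ C, 2 * exp (-(2 * m * t ^ 2)) := Finset.sum_le_sum fun g hg =>
        measureReal_pi_abs_sampleMean_sub_integral_ge_le (hC g hg) (nashLoss_mem_Icc g) m ht
    _ = C.card * (2 * exp (-(2 * m * t ^ 2))) := by rw [Finset.sum_const, nsmul_eq_mul]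

variable {H : Set (NEApprox N A)}

lemma measureReal_exists_deviation_gt_le (hH : ∀ h ∈ H, Measurable (nashLoss h))
    (hC : ∀ g ∈ C, Measurable (nashLoss g)) {r : ℝ} (hcover : Covers r C H) {t : ℝ}
    (ht : 0 ≤ t) :
    (Measure.pi fun _ : Fin m => D).real
        {S | ∃ h ∈ H, t + 4 * r < |empRisk S h - trueRisk D h|}
      ≤ C.card * (2 * exp (-(2 * m * t ^ 2))) := by
  refine (measureReal_mono ?_ (measure_ne_top _ _)).trans (measureReal_biUnion_deviation_le hC ht)
  rintro S ⟨h, hh, hdev⟩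
  obtain ⟨g, hg, hhg⟩ := hcover h hh
  have := abs_empRisk_sub_trueRisk_le_of_dist1_le (D := D) (hH h hh) (hC g hg) hhg S
  exact Set.mem_biUnion hg (by simp only [Set.mem_ofPred_eq]; linarith)

end EmpiricalRisk

theorem agnostic_pac_learnability_of_NE_general
    {N : Type*} [Fintype N] [DecidableEq N] [Nonempty N]
    {A : N → Type*} [∀ i, Fintype (A i)] [∀ i, DecidableEq (A i)] [∀ i, Nonempty (A i)]
    (H : Set (NEApprox N A)) (hH : H.Nonempty)
    (hHmeas : ∀ h ∈ H, Measurable (nashLoss h))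
    (D : Measure (GameUtil N A)) [IsProbabilityMeasure D]
    (ε δ : ℝ) (hε : ε ∈ Set.Ioo (0 : ℝ) 1) (hδ : δ ∈ Set.Ioo (0 : ℝ) 1)
    (C : Finset (NEApprox N A)) (K : ℕ) (hK : C.card = K)
    (hCmeas : ∀ g ∈ C, Measurable (nashLoss g))
    (hcover : Covers (ε / 12) C H)
    {m : ℕ}
    (hsetmeas : MeasurableSet
      {S : Fin m → GameUtil N A | ∃ h ∈ H, |empRisk S h - trueRisk D h| > ε / 2})
    (hm : 18 / ε ^ 2 * (Real.log (2 / δ) + Real.log K) ≤ (m : ℝ)) :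
    ENNReal.ofReal (1 - δ) ≤
      (MeasureTheory.Measure.pi fun _ : Fin m => D)
        {S : Fin m → GameUtil N A | ∀ hS ∈ H,
          (∀ h ∈ H, empRisk S hS ≤ empRisk S h) →
            trueRisk D hS ≤ sInf (trueRisk D '' H) + ε} := by
  obtain ⟨hε, -⟩ := hε
  obtain ⟨hδ, -⟩ := hδ
  set μ := Measure.pi fun _ : Fin m => D
  set bad := {S : Fin m → GameUtil N A | ∃ h ∈ H, |empRisk S h - trueRisk D h| > ε / 2}
  have hgood : badᶜ ⊆ {S | ∀ hS ∈ H, (∀ h ∈ H, empRisk S hS ≤ empRisk S h) →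
      trueRisk D hS ≤ sInf (trueRisk D '' H) + ε} := by
    intro S hS g hg hmin
    simp only [bad, Set.mem_compl_iff, Set.mem_ofPred_eq, not_exists, not_and, not_lt] at hS
    linarith [le_csInf_image_add_of_isMinOn hH hS hg (isMinOn_iff.2 hmin)]
  have hexp : log (2 / δ) + log K ≤ 2 * m * (ε / 6) ^ 2 := by
    rw [div_mul_eq_mul_div, div_le_iff₀ (by positivity)] at hm
    linarith
  have hμbad : μ.real bad ≤ δ := by
    have hsplit : ε / 2 = ε / 6 + 4 * (ε / 12) := by ring
    calc μ.real bad ≤ K * (2 * exp (-(2 * m * (ε / 6) ^ 2))) := by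
          simpa only [bad, gt_iff_lt, hsplit, hK] using
            measureReal_exists_deviation_gt_le hHmeas hCmeas hcover (by positivity)
      _ ≤ δ := natCast_mul_two_mul_exp_neg_le hδ hexp
  calc ENNReal.ofReal (1 - δ) ≤ ENNReal.ofReal (μ.real badᶜ) := by
        rw [probReal_compl_eq_one_sub hsetmeas]
        gcongr
    _ = μ badᶜ := ofReal_measureReal
    _ ≤ _ := measure_mono hgood

theorem agnostic_pac_learnability_of_NE
    {N : Type*} [Fintype N] [DecidableEq N] [Nonempty N]
    {A : N → Type*} [∀ i, Fintype (A i)] [∀ i, DecidableEq (A i)] [∀ i, Nonempty (A i)]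
    (H : Set (NEApprox N A)) (hH : H.Nonempty)
    (hHmeas : ∀ h ∈ H, Measurable (nashLoss h))
    (D : Measure (GameUtil N A)) [IsProbabilityMeasure D]
    (ε δ : ℝ) (hε : ε ∈ Set.Ioo (0 : ℝ) 1) (hδ : δ ∈ Set.Ioo (0 : ℝ) 1)
    (C : Finset (NEApprox N A)) (hC : C.Nonempty) (K : ℕ) (hK : C.card = K)
    (hCmeas : ∀ g ∈ C, Measurable (nashLoss g))
    (hcover : Covers (ε / 12) C H)
    {m : ℕ}
    (hsetmeas : MeasurableSet
      {S : Fin m → GameUtil N A | ∃ h ∈ H, |empRisk S h - trueRisk D h| > ε / 2})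
    (hm : 18 / ε ^ 2 * (Real.log (2 / δ) + Real.log K) ≤ (m : ℝ)) :
    ENNReal.ofReal (1 - δ) ≤
      (MeasureTheory.Measure.pi fun _ : Fin m => D)
        {S : Fin m → GameUtil N A | ∀ hS ∈ H,
          (∀ h ∈ H, empRisk S hS ≤ empRisk S h) →
            trueRisk D hS ≤ sInf (trueRisk D '' H) + ε} :=
  agnostic_pac_learnability_of_NE_general H hH hHmeas D ε δ hε hδ C K hK hCmeas hcover hsetmeas hm
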